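/- arXiv:2409.02299 — 4 statements merged into one kernel-verified Lean document; each statement's English description precedes it below -/
import Mathlib

section
/- Let C ⊆ ℕ^p be a finitely generated integer cone and S ⊆ C a C-semigroup (an additive submonoid of C with C \ S finite). Then the set of minimal elements of S \ {0} with respect to the order x ≤_S y ⟺ y - x ∈ S is finite. -/
private lemma filter_ne_zero_sum {α : Type*} [AddCommMonoid α] [DecidableEq α]
    (l : List α) : (l.filter (fun g => ¬ g = 0)).sum = l.sum := by
  induction l with
  | nil => simp
  | cons a t ih =>
    by_cases ha : a = 0
    · simp only [decide_not] at ih ⊢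
      simp [ha, List.filter, ih]
    · simp only [decide_not] at ih ⊢
      simp [ha, List.filter, ih]

private lemma exists_good_split (p : ℕ) (M : ℤ) :
    ∀ (l : List (Fin p → ℤ)) (a : ℤ), 0 ≤ a →
      (∀ g ∈ l, 1 ≤ ∑ i, g i ∧ ∑ i, g i ≤ M) →
      a < ∑ i, l.sum i →
      ∃ l₁ l₂, l = l₁ ++ l₂ ∧ a < ∑ i, l₁.sum i ∧ ∑ i, l₁.sum i ≤ a + M := by
  intro l
  induction l with
  | nil => intro a ha _ hlt; simp at hlt; omega
  | cons g t ih =>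
    intro a ha hmem hlt
    have hsum : ∑ i, (g :: t).sum i = (∑ i, g i) + ∑ i, t.sum i := by
      simp [Finset.sum_add_distrib]
    obtain ⟨hg1, hgM⟩ := hmem g (by simp)
    by_cases hcase : a < ∑ i, g i
    · exact ⟨[g], t, rfl, by simpa using hcase, by simp; omega⟩
    · push_neg at hcase
      have ht : a - ∑ i, g i < ∑ i, t.sum i := by omega
      obtain ⟨t₁, t₂, heq, h1, h2⟩ := ih (a - ∑ i, g i) (by omega)
        (fun x hx => hmem x (by simp [hx])) ht
      refine ⟨g :: t₁, t₂, by simp [heq], ?_, ?_⟩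
      · simp [Finset.sum_add_distrib]; omega
      · simp [Finset.sum_add_distrib]; omega

theorem multiplicities_finite (p : ℕ) (C S : Set (Fin p → ℤ))
    (hCnonneg : ∀ x ∈ C, ∀ i, 0 ≤ x i)
    (hCfg : ∃ G : Finset (Fin p → ℤ),
      C = (AddSubmonoid.closure (G : Set (Fin p → ℤ)) : Set (Fin p → ℤ)))
    (hSC : S ⊆ C) (hS0 : (0 : Fin p → ℤ) ∈ S)
    (hSadd : ∀ a ∈ S, ∀ b ∈ S, a + b ∈ S)
    (hfin : (C \ S).Finite) :
    {x | x ∈ S ∧ x ≠ 0 ∧ ∀ y ∈ S, y ≠ 0 → y ≠ x → x - y ∉ S}.Finite := by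
  classical
  obtain ⟨G, hG⟩ := hCfg
  set σ : (Fin p → ℤ) → ℤ := fun x => ∑ i, x i with hσdef
  have hσ0 : ∀ x ∈ C, 0 ≤ σ x := fun x hx => Finset.sum_nonneg fun i _ => hCnonneg x hx i
  -- bound for gaps
  set N : ℤ := ((hfin.toFinset.sup fun h => (σ h).toNat : ℕ) : ℤ) with hNdef
  have hN0 : 0 ≤ N := by positivity
  have hNbound : ∀ h ∈ C \ S, σ h ≤ N := by
    intro h hh
    have h1 : (σ h).toNat ≤ (hfin.toFinset.sup fun h => (σ h).toNat) :=
      Finset.le_sup (f := fun h => (σ h).toNat) (hfin.mem_toFinset.mpr hh)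
    have := hσ0 h hh.1
    omega
  -- elements of C with large sum are in S
  have hbig : ∀ x ∈ C, N < σ x → x ∈ S := by
    intro x hx hlt
    by_contra hxS
    exact absurd (hNbound x ⟨hx, hxS⟩) (by omega)
  -- generator bound
  set M : ℤ := ((G.sup fun g => (σ g).toNat : ℕ) : ℤ) with hMdef
  have hGC : ∀ g ∈ G, g ∈ C := by
    intro g hg
    rw [hG]
    exact AddSubmonoid.subset_closure hg
  have hMbound : ∀ g ∈ G, σ g ≤ M := by
    intro g hg
    have h1 : (σ g).toNat ≤ (G.sup fun g => (σ g).toNat) :=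
      Finset.le_sup (f := fun g => (σ g).toNat) hg
    have := hσ0 g (hGC g hg)
    omega
  -- positivity of σ on nonzero elements of C
  have hpos : ∀ x ∈ C, x ≠ 0 → 1 ≤ σ x := by
    intro x hx hx0
    rcases lt_or_eq_of_le (hσ0 x hx) with h | h
    · omega
    · exfalso; apply hx0
      funext i
      have := (Finset.sum_eq_zero_iff_of_nonneg
        (fun i _ => hCnonneg x hx i)).mp h.symm i (Finset.mem_univ i)
      simpa using this
  -- main bound: minimal elements have σ ≤ 2N + M
  have hkey : ∀ x, x ∈ S → x ≠ 0 → (∀ y ∈ S, y ≠ 0 → y ≠ x → x - y ∉ S) →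
      σ x ≤ 2 * N + M := by
    intro x hxS hx0 hmin
    by_contra hbigx
    push_neg at hbigx
    have hxcl : x ∈ AddSubmonoid.closure (G : Set (Fin p → ℤ)) := by
      have := hSC hxS; rwa [hG] at this
    obtain ⟨l, hlG, hlsum⟩ := AddSubmonoid.exists_list_of_mem_closure hxcl
    -- filter out zeros
    set l' := l.filter (fun g => ¬ g = 0) with hl'def
    have hl'G : ∀ g ∈ l', g ∈ (G : Set (Fin p → ℤ)) ∧ g ≠ 0 := by
      intro g hg
      rw [hl'def, List.mem_filter] at hg
      exact ⟨hlG g hg.1, by simpa using hg.2⟩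
    have hl'sum : l'.sum = x := by
      rw [← hlsum, hl'def]; exact filter_ne_zero_sum l
    have hl'bnd : ∀ g ∈ l', 1 ≤ σ g ∧ σ g ≤ M := by
      intro g hg
      obtain ⟨hg1, hg2⟩ := hl'G g hg
      exact ⟨hpos g (hGC g hg1) hg2, hMbound g hg1⟩
    have hlt : N < σ l'.sum := by rw [hl'sum]; omega
    obtain ⟨l₁, l₂, heq, h1, h2⟩ := exists_good_split p M l' N hN0 hl'bnd hlt
    set u := l₁.sum with hudef
    set v := l₂.sum with hvdef
    have huv : u + v = x := by rw [← hl'sum, heq, List.sum_append]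
    have huC : u ∈ C := by
      rw [hG]
      exact AddSubmonoid.list_sum_mem _ fun g hg => AddSubmonoid.subset_closure
        ((hl'G g (heq ▸ List.mem_append_left l₂ hg)).1)
    have hvC : v ∈ C := by
      rw [hG]
      exact AddSubmonoid.list_sum_mem _ fun g hg => AddSubmonoid.subset_closure
        ((hl'G g (heq ▸ List.mem_append_right l₁ hg)).1)
    have hσuv : σ u + σ v = σ x := by
      rw [← huv]; simp [hσdef, Finset.sum_add_distrib]
    have e1 : σ u = ∑ i, u i := rfl
    have e2 : σ v = ∑ i, v i := rfl
    have e3 : σ l'.sum = σ x := by rw [hl'sum]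
    have hvbig : N < σ v := by omega
    have huS : u ∈ S := hbig u huC h1
    have hvS : v ∈ S := hbig v hvC hvbig
    have hu0 : u ≠ 0 := by
      intro h; rw [h] at h1; simp [hσdef] at h1; omega
    have hux : u ≠ x := by
      intro h
      have e4 : σ u = σ x := by rw [h]
      omega
    exact hmin u huS hu0 hux (by rw [show x - u = v by rw [← huv]; ring]; exact hvS)
  -- conclude finiteness
  apply Set.Finite.subset (Set.finite_Icc (0 : Fin p → ℤ) (fun _ => 2 * N + M))
  intro x hx
  obtain ⟨hxS, hx0, hmin⟩ := hx
  have hxC := hSC hxS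
  have hb := hkey x hxS hx0 hmin
  constructor
  · intro i; exact hCnonneg x hxC i
  · intro i
    calc x i ≤ σ x := Finset.single_le_sum (fun j _ => hCnonneg x hxC j) (Finset.mem_univ i)
    _ ≤ 2 * N + M := hb
end

section
/- There exists a cone C ⊆ ℕ² (spanned by (1,0) and (1,1)) and a C-semigroup S with a pseudo-Frobenius element that is not a maximal gap: for S = C \ {(1,1), (2,2)}, the element (1,1) is pseudo-Frobenius but is not maximal in H(S) under ≤_C. -/
theorem pseudoFrobenius_not_maximal_gap :
    ∃ (C S : Set (ℤ × ℤ)),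
      C = {v : ℤ × ℤ | 0 ≤ v.2 ∧ v.2 ≤ v.1} ∧
      S = C \ {((1 : ℤ), (1 : ℤ)), ((2 : ℤ), (2 : ℤ))} ∧
      ((1 : ℤ), (1 : ℤ)) ∈ C \ S ∧
      (∀ s ∈ S, s ≠ 0 → ((1 : ℤ), (1 : ℤ)) + s ∈ S) ∧
      ¬ (∀ h ∈ C \ S, h ≠ ((1 : ℤ), (1 : ℤ)) → h - ((1 : ℤ), (1 : ℤ)) ∉ C) := by
  refine ⟨{v : ℤ × ℤ | 0 ≤ v.2 ∧ v.2 ≤ v.1},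
    {v : ℤ × ℤ | 0 ≤ v.2 ∧ v.2 ≤ v.1} \ {((1 : ℤ), (1 : ℤ)), ((2 : ℤ), (2 : ℤ))},
    rfl, rfl, ?_, ?_, ?_⟩
  · constructor
    · exact ⟨by norm_num, by norm_num⟩
    · simp [Set.mem_diff]
  · rintro ⟨a, b⟩ ⟨⟨hb, hab⟩, hne⟩ hz
    simp only [Set.mem_insert_iff, Set.mem_singleton_iff, Prod.mk.injEq, not_or] at hne
    refine ⟨⟨by simpa using by linarith, by simp; linarith⟩, ?_⟩
    simp only [Set.mem_insert_iff, Set.mem_singleton_iff, Prod.add_def, Prod.mk.injEq, not_or]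
    constructor
    · rintro ⟨h1, h2⟩
      apply hz
      have : a = 0 := by linarith
      have : b = 0 := by linarith
      simp_all [Prod.ext_iff]
    · rintro ⟨h1, h2⟩
      exact hne.1 ⟨by linarith, by linarith⟩
  · intro h
    have := h ((2 : ℤ), (2 : ℤ)) ⟨⟨by norm_num, by norm_num⟩, by simp⟩ (by simp)
    apply this
    constructor <;> norm_num
end

section
/- Let C = {(x,y) ∈ ℕ² : y ≤ x} and S = C \ {(1,1),(2,2)}. Then the weight set W = {t ∈ ℕ : S ∩ Π_t ≠ ∅ and Π_t contains no maximal gap of S} equals ℕ \ {4}, and W is not closed under addition. -/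
theorem weight_set_example :
    ∀ (C S : Set (ℤ × ℤ)),
      C = {v : ℤ × ℤ | 0 ≤ v.2 ∧ v.2 ≤ v.1} →
      S = C \ {((1:ℤ),(1:ℤ)), ((2:ℤ),(2:ℤ))} →
      ∀ W : Set ℕ,
        W = {t : ℕ | (∃ s ∈ S, s.1 + s.2 = (t : ℤ)) ∧
              ∀ f ∈ C \ S, (∀ h ∈ C \ S, h ≠ f → h - f ∉ C) → f.1 + f.2 ≠ (t : ℤ)} →
        W = {t : ℕ | t ≠ 4} ∧ ¬ (∀ a ∈ W, ∀ b ∈ W, a + b ∈ W) := by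
  intro C S hC hS W hW
  subst hC hS
  -- membership in C \ S characterization
  have hdiff : ∀ f : ℤ × ℤ,
      f ∈ {v : ℤ × ℤ | 0 ≤ v.2 ∧ v.2 ≤ v.1} \
        ({v : ℤ × ℤ | 0 ≤ v.2 ∧ v.2 ≤ v.1} \ {((1:ℤ),(1:ℤ)), ((2:ℤ),(2:ℤ))}) ↔
      f = ((1:ℤ),(1:ℤ)) ∨ f = ((2:ℤ),(2:ℤ)) := by
    intro f
    constructor
    · rintro ⟨hfC, hfS⟩
      by_contra h
      push_neg at h
      refine hfS ⟨hfC, fun hm => ?_⟩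
      simp only [Set.mem_insert_iff, Set.mem_singleton_iff] at hm
      rcases hm with e | e
      exacts [h.1 e, h.2 e]
    · rintro (rfl | rfl)
      · exact ⟨by norm_num, by simp⟩
      · exact ⟨by norm_num, by simp⟩
  have hWeq : W = {t : ℕ | t ≠ 4} := by
    rw [hW]
    ext t
    simp only [Set.mem_setOf_eq]
    constructor
    · rintro ⟨-, hmax⟩ ht4
      have h22 : ((2:ℤ),(2:ℤ)) ∈ _ := (hdiff ((2:ℤ),(2:ℤ))).mpr (Or.inr rfl)
      have := hmax ((2:ℤ),(2:ℤ)) h22 ?_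
      · subst ht4
        exact this (by norm_num)
      · intro h hh hne
        rcases (hdiff h).mp hh with rfl | rfl
        · intro hc
          exact absurd hc.1 (by norm_num)
        · exact absurd rfl hne
    · intro ht4
      refine ⟨⟨((t:ℤ), 0), ⟨⟨le_refl 0, Int.natCast_nonneg t⟩, ?_⟩, by ring⟩, ?_⟩
      · intro hmem
        simp only [Set.mem_insert_iff, Set.mem_singleton_iff, Prod.mk.injEq] at hmem
        rcases hmem with ⟨_, h⟩ | ⟨_, h⟩ <;> norm_num at h
      · intro f hf hmaxf
        rcases (hdiff f).mp hf with rfl | rfl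
        · exfalso
          have h22 : ((2:ℤ),(2:ℤ)) ∈ _ := (hdiff ((2:ℤ),(2:ℤ))).mpr (Or.inr rfl)
          have := hmaxf ((2:ℤ),(2:ℤ)) h22 (by simp)
          apply this
          constructor <;> norm_num
        · intro h
          apply ht4
          norm_num at h
          omega
  refine ⟨hWeq, ?_⟩
  intro h
  have h2 : 2 ∈ W := by rw [hWeq]; simp
  have := h 2 h2 2 h2
  rw [hWeq] at this
  simp at this
end

section
/- For any integer cone C ⊆ ℕ^p of dimension at least 2, the quasi-elasticity ρ(S) = max(w(𝔉(S)))/min(w(𝔉(S))) is unbounded over C-semigroups S: for every M ∈ ℝ there exists a C-semigroup S with ρ(S) > M. -/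
theorem quasi_elasticity_unbounded (p : ℕ) (C : Set (Fin p → ℤ))
    (hCnonneg : ∀ x ∈ C, ∀ i, 0 ≤ x i)
    (hC0 : (0 : Fin p → ℤ) ∈ C) (hCadd : ∀ a ∈ C, ∀ b ∈ C, a + b ∈ C)
    (hCfg : ∃ G : Finset (Fin p → ℤ),
      C = (AddSubmonoid.closure (G : Set (Fin p → ℤ)) : Set (Fin p → ℤ)))
    (hdim : ∃ u v : Fin p → ℤ, u ∈ C ∧ v ∈ C ∧ LinearIndependent ℤ ![u, v]) :
    ∀ M : ℝ, ∃ S : Set (Fin p → ℤ),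
      (0 : Fin p → ℤ) ∈ S ∧ S ⊆ C ∧ (∀ a ∈ S, ∀ b ∈ S, a + b ∈ S) ∧
      (C \ S).Finite ∧
      ∃ f₁ f₂ : Fin p → ℤ,
        f₁ ∈ C \ S ∧ (∀ h ∈ C \ S, h ≠ f₁ → h - f₁ ∉ C) ∧
        f₂ ∈ C \ S ∧ (∀ h ∈ C \ S, h ≠ f₂ → h - f₂ ∉ C) ∧
        (∀ g ∈ C \ S, (∀ h ∈ C \ S, h ≠ g → h - g ∉ C) →
          (∑ i, f₁ i) ≤ (∑ i, g i) ∧ (∑ i, g i) ≤ (∑ i, f₂ i)) ∧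
        ((∑ i, f₂ i : ℤ) : ℝ) > M * ((∑ i, f₁ i : ℤ) : ℝ) := by
  classical
  intro M
  obtain ⟨G, hG⟩ := hCfg
  obtain ⟨u, v, hu, hv, huv⟩ := hdim
  set w : (Fin p → ℤ) → ℤ := fun x => ∑ i, x i with hwdef
  have hwadd : ∀ x y : Fin p → ℤ, w (x + y) = w x + w y := by
    intro x y; simp [hwdef, Finset.sum_add_distrib]
  have hw0 : w 0 = 0 := by simp [hwdef]
  have hwnn : ∀ x ∈ C, 0 ≤ w x := fun x hx =>
    Finset.sum_nonneg fun i _ => hCnonneg x hx i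
  have hcoord : ∀ x ∈ C, ∀ i, x i ≤ w x := by
    intro x hx i
    exact Finset.single_le_sum (fun j _ => hCnonneg x hx j) (Finset.mem_univ i)
  have hwpos : ∀ x ∈ C, x ≠ 0 → 1 ≤ w x := by
    intro x hx hne
    obtain ⟨i, hi⟩ := Function.ne_iff.mp hne
    have h0 : 0 ≤ x i := hCnonneg x hx i
    have h1 : x i ≠ 0 := by simpa using hi
    have h2 : 1 ≤ x i := by omega
    exact le_trans h2 (hcoord x hx i)
  have hune : u ≠ 0 := by have := huv.ne_zero 0; simpa using this
  have hwu : 1 ≤ w u := hwpos u hu hune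
  -- coordinate where u, v have different "slopes"
  obtain ⟨i₀, hi₀⟩ : ∃ i, u i * w v ≠ v i * w u := by
    by_contra hcon
    push_neg at hcon
    have hrel : (w v) • u + (-(w u)) • v = 0 := by
      funext i
      have h := hcon i
      simp only [Pi.add_apply, Pi.smul_apply, smul_eq_mul, Pi.zero_apply, neg_mul]
      linarith
    obtain ⟨h1, h2⟩ := LinearIndependent.pair_iff.mp huv (w v) (-(w u)) hrel
    omega
  have hGsub : (G : Set (Fin p → ℤ)) ⊆ C := by rw [hG]; exact AddSubmonoid.subset_closure
  set G' := G.filter (fun g => g ≠ 0) with hG'def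
  have hG'ne : G'.Nonempty := by
    by_contra hcon
    have hz : ∀ x ∈ C, x = 0 := by
      intro x hx
      rw [hG] at hx
      refine AddSubmonoid.closure_induction (fun g hg => ?_) rfl
        (fun a b _ _ ha hb => by rw [ha, hb, add_zero]) hx
      by_contra hgne
      exact hcon ⟨g, Finset.mem_filter.mpr ⟨Finset.mem_coe.mp hg, hgne⟩⟩
    exact hune (hz u hu)
  obtain ⟨g₂, hg₂G', hg₂max⟩ := G'.exists_max_image (fun g => (g i₀ : ℚ) / (w g : ℚ)) hG'ne
  have hg₂G : g₂ ∈ G := (Finset.mem_filter.mp hg₂G').1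
  have hg₂ne : g₂ ≠ 0 := (Finset.mem_filter.mp hg₂G').2
  have hg₂C : g₂ ∈ C := hGsub hg₂G
  have hwg₂ : 1 ≤ w g₂ := hwpos g₂ hg₂C hg₂ne
  have hmax : ∀ h ∈ G, h i₀ * w g₂ ≤ g₂ i₀ * w h := by
    intro h hh
    by_cases hh0 : h = 0
    · subst hh0; simp [hw0]
    · have hhC := hGsub hh
      have hq := hg₂max h (Finset.mem_filter.mpr ⟨hh, hh0⟩)
      have hwh : (0:ℚ) < (w h : ℚ) := by exact_mod_cast hwpos h hhC hh0
      have hwg : (0:ℚ) < (w g₂ : ℚ) := by exact_mod_cast hwg₂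
      rw [div_le_div_iff₀ hwh hwg] at hq
      exact_mod_cast hq
  set ψ : (Fin p → ℤ) → ℤ := fun x => g₂ i₀ * w x - w g₂ * x i₀ with hψdef
  have hψadd : ∀ x y, ψ (x + y) = ψ x + ψ y := by
    intro x y
    simp only [hψdef, hwadd, Pi.add_apply]
    ring
  have hψ0 : ψ 0 = 0 := by simp [hψdef, hw0]
  have hψC : ∀ x ∈ C, 0 ≤ ψ x := by
    intro x hx
    rw [hG] at hx
    refine AddSubmonoid.closure_induction (fun g hg => ?_) (by rw [hψ0])
      (fun a b _ _ ha hb => by rw [hψadd]; omega) hx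
    have h2 := hmax g (Finset.mem_coe.mp hg)
    simp only [hψdef]
    linarith [mul_comm (w g₂) (g i₀)]
  have hψg₂ : ψ g₂ = 0 := by simp only [hψdef]; ring
  -- an element with positive ψ
  obtain ⟨x₀, hx₀C, hx₀pos⟩ : ∃ x₀ ∈ C, 0 < ψ x₀ := by
    by_contra hcon
    push_neg at hcon
    have hψu : ψ u = 0 := le_antisymm (hcon u hu) (hψC u hu)
    have hψv : ψ v = 0 := le_antisymm (hcon v hv) (hψC v hv)
    have e1 : g₂ i₀ * w u = w g₂ * u i₀ := by simp only [hψdef] at hψu; linarith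
    have e2 : g₂ i₀ * w v = w g₂ * v i₀ := by simp only [hψdef] at hψv; linarith
    apply hi₀
    have key : w g₂ * (u i₀ * w v) = w g₂ * (v i₀ * w u) := by
      calc w g₂ * (u i₀ * w v) = (w g₂ * u i₀) * w v := by ring
        _ = (g₂ i₀ * w u) * w v := by rw [e1]
        _ = (g₂ i₀ * w v) * w u := by ring
        _ = (w g₂ * v i₀) * w u := by rw [e2]
        _ = w g₂ * (v i₀ * w u) := by ring
    exact mul_left_cancel₀ (by omega : w g₂ ≠ 0) key
  -- α : minimal-weight element with ψ > 0 (an "atom")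
  have hP : ∃ n : ℕ, ∃ x, x ∈ C ∧ 0 < ψ x ∧ w x = (n : ℤ) :=
    ⟨(w x₀).toNat, x₀, hx₀C, hx₀pos, (Int.toNat_of_nonneg (hwnn x₀ hx₀C)).symm⟩
  obtain ⟨α, hαC, hψα, hwα⟩ := Nat.find_spec hP
  have hαmin : ∀ y ∈ C, 0 < ψ y → w α ≤ w y := by
    intro y hy hψy
    by_contra hlt
    push_neg at hlt
    have ht : ((w y).toNat : ℤ) = w y := Int.toNat_of_nonneg (hwnn y hy)
    have hm : (w y).toNat < Nat.find hP := by omega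
    exact Nat.find_min hP hm ⟨y, hy, hψy, ht.symm⟩
  have hαne : α ≠ 0 := fun h => by rw [h, hψ0] at hψα; exact lt_irrefl 0 hψα
  have hwαpos : 1 ≤ w α := hwpos α hαC hαne
  have hatom : ∀ a ∈ C, ∀ b ∈ C, a + b = α → a = 0 ∨ b = 0 := by
    intro a ha b hb hab
    by_contra hcon
    push_neg at hcon
    obtain ⟨ha0, hb0⟩ := hcon
    have hψab : ψ a + ψ b = ψ α := by rw [← hψadd, hab]
    have hwa := hwpos a ha ha0
    have hwb := hwpos b hb hb0
    have hwab : w a + w b = w α := by rw [← hwadd, hab]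
    rcases lt_or_ge 0 (ψ a) with h | h
    · have := hαmin a ha h; omega
    · have hψa : ψ a = 0 := le_antisymm h (hψC a ha)
      have hψb : 0 < ψ b := by omega
      have := hαmin b hb hψb; omega
  -- parameters
  obtain ⟨n, hn⟩ := exists_nat_gt (M * (w α : ℝ))
  set k : ℕ := n + 1 with hk
  set N : ℤ := (k : ℤ) * w g₂ with hN
  set Gaps : Set (Fin p → ℤ) := {x | x ∈ C ∧ x ≠ 0 ∧ ψ x = 0 ∧ w x ≤ N} ∪ {α} with hGapsdef
  have hGapsC : Gaps ⊆ C := by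
    rintro x (⟨hx, -, -, -⟩ | rfl)
    · exact hx
    · exact hαC
  have hGapsne0 : ∀ x ∈ Gaps, x ≠ 0 := by
    rintro x (⟨-, hx, -, -⟩ | rfl)
    · exact hx
    · exact hαne
  -- multiples of g₂
  have hsmul : ∀ m : ℕ, (m • g₂ ∈ C) ∧ w (m • g₂) = (m : ℤ) * w g₂ ∧ ψ (m • g₂) = 0 := by
    intro m
    induction m with
    | zero => simp [hC0, hw0, hψ0]
    | succ m ih =>
      obtain ⟨h1, h2, h3⟩ := ih
      refine ⟨?_, ?_, ?_⟩
      · rw [succ_nsmul]; exact hCadd _ h1 _ hg₂C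
      · rw [succ_nsmul, hwadd, h2]; push_cast; ring
      · rw [succ_nsmul, hψadd, h3, hψg₂]; norm_num
  obtain ⟨hgbC, hgbw, hgbψ⟩ := hsmul k
  have hgbne : k • g₂ ≠ 0 := by
    intro h
    rw [h, hw0] at hgbw
    have : (1:ℤ) ≤ (k:ℤ) := by exact_mod_cast Nat.one_le_iff_ne_zero.mpr (by omega)
    nlinarith
  have hgbGaps : k • g₂ ∈ Gaps := Or.inl ⟨hgbC, hgbne, hgbψ, le_of_eq hgbw⟩
  have hGapsFin : Gaps.Finite := by
    have hsub : Gaps ⊆ insert α (Set.pi Set.univ fun _ : Fin p => Set.Icc (0:ℤ) N) := by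
      rintro x (⟨hxC, -, -, hxw⟩ | rfl)
      · exact Set.mem_insert_iff.mpr
          (Or.inr fun i _ => ⟨hCnonneg x hxC i, le_trans (hcoord x hxC i) hxw⟩)
      · exact Set.mem_insert _ _
    exact Set.Finite.subset
      (Set.Finite.insert α (Set.Finite.pi fun _ => Set.finite_Icc (0:ℤ) N)) hsub
  set MG : Set (Fin p → ℤ) := {g | g ∈ Gaps ∧ ∀ h ∈ Gaps, h ≠ g → h - g ∉ C} with hMGdef
  have hαGaps : α ∈ Gaps := Or.inr rfl
  have hαMG : α ∈ MG := by
    refine ⟨hαGaps, ?_⟩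
    intro h hh hne hsub
    have h1 : 0 ≤ ψ (h - α) := hψC _ hsub
    have h3 := hψadd (h - α) α
    rw [sub_add_cancel] at h3
    rcases hh with ⟨-, -, hψh, -⟩ | hh
    · rw [hψh] at h3; omega
    · exact hne hh
  obtain ⟨gmax, hgmaxT, hgmaxw⟩ := Finset.exists_max_image hGapsFin.toFinset w
    ⟨k • g₂, hGapsFin.mem_toFinset.mpr hgbGaps⟩
  have hgmaxGaps : gmax ∈ Gaps := hGapsFin.mem_toFinset.mp hgmaxT
  have hgmaxw' : ∀ g ∈ Gaps, w g ≤ w gmax := fun g hg =>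
    hgmaxw g (hGapsFin.mem_toFinset.mpr hg)
  have hgmaxMG : gmax ∈ MG := by
    refine ⟨hgmaxGaps, ?_⟩
    intro h hh hne hsub
    have h1 : h - gmax ≠ 0 := fun hz => hne (by rwa [sub_eq_zero] at hz)
    have h2 := hwpos _ hsub h1
    have h3 : w h = w (h - gmax) + w gmax := by rw [← hwadd, sub_add_cancel]
    have h4 := hgmaxw' h hh
    omega
  have hMGfin : MG.Finite := hGapsFin.subset fun x hx => hx.1
  obtain ⟨f₁, hf₁T, hf₁min⟩ := Finset.exists_min_image hMGfin.toFinset w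
    ⟨α, hMGfin.mem_toFinset.mpr hαMG⟩
  obtain ⟨f₂, hf₂T, hf₂max⟩ := Finset.exists_max_image hMGfin.toFinset w
    ⟨α, hMGfin.mem_toFinset.mpr hαMG⟩
  have hf₁MG : f₁ ∈ MG := hMGfin.mem_toFinset.mp hf₁T
  have hf₂MG : f₂ ∈ MG := hMGfin.mem_toFinset.mp hf₂T
  have hf₁min' : ∀ g ∈ MG, w f₁ ≤ w g := fun g hg =>
    hf₁min g (hMGfin.mem_toFinset.mpr hg)
  have hf₂max' : ∀ g ∈ MG, w g ≤ w f₂ := fun g hg =>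
    hf₂max g (hMGfin.mem_toFinset.mpr hg)
  have hCS : C \ (C \ Gaps) = Gaps := by
    ext x
    simp only [Set.mem_diff, not_and, not_not]
    constructor
    · rintro ⟨hxC, hx⟩; exact hx hxC
    · intro hx; exact ⟨hGapsC hx, fun _ => hx⟩
  refine ⟨C \ Gaps, ⟨hC0, ?_⟩, Set.diff_subset, ?_, ?_, f₁, f₂, ?_, ?_, ?_, ?_, ?_, ?_⟩
  · -- 0 ∉ Gaps
    rintro (⟨-, h, -, -⟩ | h)
    · exact h rfl
    · exact hαne ((Set.mem_singleton_iff.mp h).symm)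
  · -- closure under addition
    intro a ha b hb
    refine ⟨hCadd _ ha.1 _ hb.1, ?_⟩
    rintro (⟨-, habne, hψab, hwab⟩ | hab)
    · have hψs : ψ a + ψ b = 0 := by rw [← hψadd]; exact hψab
      have hψa : ψ a = 0 := le_antisymm (by linarith [hψC b hb.1]) (hψC a ha.1)
      have hψb : ψ b = 0 := by omega
      have hws : w a + w b ≤ N := by rw [← hwadd]; exact hwab
      by_cases ha0 : a = 0
      · subst ha0
        rw [zero_add] at habne hψab hwab
        exact hb.2 (Or.inl ⟨hb.1, habne, hψab, hwab⟩)
      · refine ha.2 (Or.inl ⟨ha.1, ha0, hψa, ?_⟩)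
        have := hwnn b hb.1
        omega
    · have hab' : a + b = α := hab
      rcases hatom a ha.1 b hb.1 hab' with h0 | h0
      · subst h0
        rw [zero_add] at hab'
        exact hb.2 (hab' ▸ hαGaps)
      · subst h0
        rw [add_zero] at hab'
        exact ha.2 (hab' ▸ hαGaps)
  · rw [hCS]; exact hGapsFin
  · rw [hCS]; exact hf₁MG.1
  · intro h hh hne
    rw [hCS] at hh
    exact hf₁MG.2 h hh hne
  · rw [hCS]; exact hf₂MG.1
  · intro h hh hne
    rw [hCS] at hh
    exact hf₂MG.2 h hh hne
  · intro g hg hmaxg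
    rw [hCS] at hg
    have hgMG : g ∈ MG := ⟨hg, fun h hh hne => hmaxg h (by rw [hCS]; exact hh) hne⟩
    exact ⟨hf₁min' g hgMG, hf₂max' g hgMG⟩
  · -- the quantitative inequality
    have hwf₂k : (k : ℤ) ≤ w f₂ := by
      have h1 := hf₂max' gmax hgmaxMG
      have h2 := hgmaxw' (k • g₂) hgbGaps
      have h3 : (k:ℤ) ≤ (k:ℤ) * w g₂ := le_mul_of_one_le_right (by positivity) hwg₂
      omega
    have hwf₁α : w f₁ ≤ w α := hf₁min' α hαMG
    have hwf₁pos : 1 ≤ w f₁ := hwpos f₁ (hGapsC hf₁MG.1) (hGapsne0 f₁ hf₁MG.1)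
    show ((w f₂ : ℤ) : ℝ) > M * ((w f₁ : ℤ) : ℝ)
    rcases le_or_gt M 0 with hM | hM
    · have c1 : (0:ℝ) ≤ ((w f₁ : ℤ):ℝ) := by exact_mod_cast (by omega : (0:ℤ) ≤ w f₁)
      have c2 : (1:ℝ) ≤ ((w f₂ : ℤ):ℝ) := by
        exact_mod_cast (by omega : (1:ℤ) ≤ w f₂)
      nlinarith
    · have c1 : ((w f₁:ℤ):ℝ) ≤ ((w α:ℤ):ℝ) := by exact_mod_cast hwf₁α
      have c2 : M * ((w f₁:ℤ):ℝ) ≤ M * ((w α:ℤ):ℝ) :=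
        mul_le_mul_of_nonneg_left c1 (le_of_lt hM)
      have c4 : ((n:ℕ):ℝ) < ((w f₂:ℤ):ℝ) := by
        have : ((n:ℕ):ℤ) < w f₂ := by omega
        exact_mod_cast this
      linarith
end
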